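/- arXiv:2005.10769 — 4 statements merged into one kernel-verified Lean document; each statement's English description precedes it below -/
import Mathlib

section
/- For every n ≥ 0, the set 𝒫(n) is the disjoint union of the five subsets 𝒜(n), ℬ(n), 𝒞(n), 𝒟(n), ℰ(n). -/
/-- The forbidden partitions of the Ising model basis, as multisets of parts. -/
def Forbidden : Set (Multiset ℕ) :=
  {mu | (∃ p : ℕ, 2 ≤ p ∧
        (mu = {p, p, p} ∨ mu = {p + 1, p, p} ∨ mu = {p + 1, p + 1, p} ∨
         mu = {p + 2, p + 1, p} ∨ mu = {p + 2, p + 2, p} ∨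
         mu = {p + 3, p + 3, p, p} ∨ mu = {p + 4, p + 3, p, p} ∨
         mu = {p + 4, p + 3, p + 1, p} ∨ mu = {p + 4, p + 4, p + 1, p} ∨
         mu = {p + 6, p + 5, p + 3, p + 1, p})) ∨
      (∃ p : ℕ, 3 ≤ p ∧ mu = {p + 2, p, p}) ∨
      mu = {5, 4, 2, 2} ∨ mu = {7, 6, 4, 2, 2} ∨ mu = {7, 7, 4, 2, 2} ∨
      mu = {9, 8, 6, 4, 2, 2}}

/-- Membership in `𝒫(n)`: all parts are `≥ 2` and the partition avoids every
forbidden partition (`λ` avoids `μ` iff the multiset of parts of `μ` is not a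
sub-multiset of the multiset of parts of `λ`). -/
def MemP {n : ℕ} (l : n.Partition) : Prop :=
  (∀ i ∈ l.parts, 2 ≤ i) ∧ ∀ mu ∈ Forbidden, ¬ mu ≤ l.parts

/-- The parts of a partition sorted in increasing order, so that the smallest
part `λ_m` is (if it exists) entry `0`, `λ_{m-1}` is entry `1`, etc. -/
def sparts {n : ℕ} (l : n.Partition) : List ℕ := l.parts.sort (· ≤ ·)

/-- `λ ∈ 𝒜(n)`: `λ ∈ 𝒫(n)` and the smallest part satisfies `λ_m > 2`
(for `n = 0` this gives `𝒜(0) = {[]}`, the empty partition). -/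
def MemA {n : ℕ} (l : n.Partition) : Prop := MemP l ∧ ∀ i ∈ l.parts, 2 < i

/-- `λ ∈ ℬ(n)`: `λ ∈ 𝒫(n)` and `2 = λ_m < λ_{m-1} - 1`
(for `n = 2` the special case `ℬ(2) = {[2]}` is the length-one clause). -/
def MemB {n : ℕ} (l : n.Partition) : Prop :=
  MemP l ∧ (sparts l)[0]? = some 2 ∧
    ((sparts l).length = 1 ∨ ∃ x, (sparts l)[1]? = some x ∧ 3 < x)

/-- `λ ∈ 𝒞(n)`: `λ ∈ 𝒫(n)` and `2 = λ_m = λ_{m-1} - 1`. -/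
def MemC {n : ℕ} (l : n.Partition) : Prop :=
  MemP l ∧ (sparts l)[0]? = some 2 ∧ (sparts l)[1]? = some 3

/-- `λ ∈ 𝒟(n)`: `λ ∈ 𝒫(n)` and `2 = λ_m = λ_{m-1} < λ_{m-2} - 2`
(for `n = 4` the special case `𝒟(4) = {[2,2]}` is the length-two clause). -/
def MemD {n : ℕ} (l : n.Partition) : Prop :=
  MemP l ∧ (sparts l)[0]? = some 2 ∧ (sparts l)[1]? = some 2 ∧
    ((sparts l).length = 2 ∨ ∃ x, (sparts l)[2]? = some x ∧ 4 < x)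

/-- `λ ∈ ℰ(n)`: `λ ∈ 𝒫(n)` and `2 = λ_m = λ_{m-1} = λ_{m-2} - 2`. -/
def MemE {n : ℕ} (l : n.Partition) : Prop :=
  MemP l ∧ (sparts l)[0]? = some 2 ∧ (sparts l)[1]? = some 2 ∧
    (sparts l)[2]? = some 4

/-!
Membership in each class is decided by the three smallest parts `λ_m ≤ λ_{m-1} ≤ λ_{m-2}`, and
the five defining conditions are mutually exclusive: each class lies in its own fibre of
`smallPartsClass ∘ sparts`. Conversely, as all parts are `≥ 2`, every possible beginning of the
increasing list of parts meets one of the conditions, except `2, 2, 2` and `2, 2, 3`, which are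
excluded by the forbidden partitions `[2,2,2]` and `[3,2,2]`.
-/

section
variable {n : ℕ} {l : n.Partition}

theorem mem_sparts {i : ℕ} : i ∈ sparts l ↔ i ∈ l.parts := Multiset.mem_sort _

theorem mem_parts_of_sparts_getElem? {k x : ℕ} (h : (sparts l)[k]? = some x) : x ∈ l.parts :=
  mem_sparts.1 (List.mem_of_getElem? h)

theorem sparts_getElem?_zero_of_two_mem (hge : ∀ i ∈ l.parts, 2 ≤ i) (h2 : 2 ∈ l.parts) :
    (sparts l)[0]? = some 2 := by
  obtain ⟨a, t, hL⟩ := List.exists_cons_of_ne_nil (List.ne_nil_of_mem (mem_sparts.2 h2))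
  have hsorted : (a :: t).Pairwise (· ≤ ·) := hL ▸ Multiset.pairwise_sort _ _
  have ha : 2 ≤ a := hge a (mem_sparts.1 (hL ▸ List.mem_cons_self))
  have ha' : a ≤ 2 := by
    rcases List.mem_cons.1 (hL ▸ mem_sparts.2 h2) with h | h
    · exact h.ge
    · exact List.rel_of_pairwise_cons hsorted h
  simp [hL, le_antisymm ha' ha]

theorem memA_of_sparts_getElem?_zero_ne (hP : MemP l) (h : (sparts l)[0]? ≠ some 2) : MemA l :=
  ⟨hP, fun i hi => (hP.1 i hi).lt_of_ne fun h2 =>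
    h (sparts_getElem?_zero_of_two_mem hP.1 (h2 ▸ hi))⟩

theorem le_parts_of_sparts_getElem? {a b c : ℕ} (h0 : (sparts l)[0]? = some a)
    (h1 : (sparts l)[1]? = some b) (h2 : (sparts l)[2]? = some c) :
    ({c, b, a} : Multiset ℕ) ≤ l.parts := by
  rw [← Multiset.sort_eq l.parts (· ≤ ·)]
  change _ ≤ ((sparts l : List ℕ) : Multiset ℕ)
  generalize sparts l = L at h0 h1 h2 ⊢
  rcases L with _ | ⟨x, _ | ⟨y, _ | ⟨z, t⟩⟩⟩ <;> simp only [List.getElem?_cons_zero,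
    List.getElem?_cons_succ, List.getElem?_nil, reduceCtorEq, Option.some.injEq] at h0 h1 h2
  subst h0 h1 h2
  exact Multiset.coe_le.2
    ((List.reverse_perm [x, y, z]).subperm_right.2 (List.sublist_append_left _ t).subperm)

theorem four_le_of_sparts_getElem? {c : ℕ} (hP : MemP l) (h0 : (sparts l)[0]? = some 2)
    (h1 : (sparts l)[1]? = some 2) (h2 : (sparts l)[2]? = some c) : 4 ≤ c := by
  have hc := hP.1 c (mem_parts_of_sparts_getElem? h2)
  have hle := le_parts_of_sparts_getElem? h0 h1 h2
  by_contra! hc4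
  interval_cases c
  · exact hP.2 _ (Or.inl ⟨2, le_rfl, Or.inl rfl⟩) hle
  · exact hP.2 _ (Or.inl ⟨2, le_rfl, Or.inr (Or.inl rfl)⟩) hle

theorem memB_or_memC_or_memD_or_memE (hP : MemP l) (h0 : (sparts l)[0]? = some 2) :
    MemB l ∨ MemC l ∨ MemD l ∨ MemE l := by
  have hpos : 0 < (sparts l).length := (List.getElem?_eq_some_iff.1 h0).1
  rcases h1 : (sparts l)[1]? with _ | b
  · exact Or.inl ⟨hP, h0, Or.inl (by have := List.getElem?_eq_none_iff.1 h1; omega)⟩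
  have hb := hP.1 b (mem_parts_of_sparts_getElem? h1)
  obtain rfl | rfl | hb := (by omega : b = 2 ∨ b = 3 ∨ 3 < b)
  · right; right
    rcases h2 : (sparts l)[2]? with _ | c
    · have hlen := (List.getElem?_eq_some_iff.1 h1).1
      exact Or.inl ⟨hP, h0, h1, Or.inl (by have := List.getElem?_eq_none_iff.1 h2; omega)⟩
    obtain rfl | hc := (four_le_of_sparts_getElem? hP h0 h1 h2).eq_or_lt'
    · exact Or.inr ⟨hP, h0, h1, h2⟩
    · exact Or.inl ⟨hP, h0, h1, Or.inr ⟨c, h2, hc⟩⟩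
  · exact Or.inr (Or.inl ⟨hP, h0, h1⟩)
  · exact Or.inl ⟨hP, h0, Or.inr ⟨b, h1, hb⟩⟩

theorem memA_or_memB_or_memC_or_memD_or_memE (hP : MemP l) :
    MemA l ∨ MemB l ∨ MemC l ∨ MemD l ∨ MemE l := by
  by_cases h0 : (sparts l)[0]? = some 2
  · exact Or.inr (memB_or_memC_or_memD_or_memE hP h0)
  · exact Or.inl (memA_of_sparts_getElem?_zero_ne hP h0)

/-- `0, …, 4` stand for `𝒜, …, ℰ`. -/
def smallPartsClass (L : List ℕ) : Fin 5 :=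
  if L[0]? ≠ some 2 then 0
  else if L[1]? = some 3 then 2
  else if L[1]? ≠ some 2 then 1
  else if L[2]? = some 4 then 4
  else 3

theorem MemA.smallPartsClass_eq (h : MemA l) : smallPartsClass (sparts l) = 0 := by
  have h0 : (sparts l)[0]? ≠ some 2 := fun h0 =>
    (h.2 2 (mem_parts_of_sparts_getElem? h0)).ne rfl
  simp [smallPartsClass, h0]

theorem MemB.smallPartsClass_eq (h : MemB l) : smallPartsClass (sparts l) = 1 := by
  obtain ⟨-, h0, hlen | ⟨x, h1, hx⟩⟩ := h
  · simp only [smallPartsClass, h0, List.getElem?_eq_none (by omega : (sparts l).length ≤ 1)]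
    rfl
  · simp [smallPartsClass, h0, h1, show x ≠ 2 by omega, show x ≠ 3 by omega]

theorem MemC.smallPartsClass_eq (h : MemC l) : smallPartsClass (sparts l) = 2 := by
  simp [smallPartsClass, h.2.1, h.2.2]

theorem MemD.smallPartsClass_eq (h : MemD l) : smallPartsClass (sparts l) = 3 := by
  obtain ⟨-, h0, h1, hlen | ⟨x, h2, hx⟩⟩ := h
  · simp only [smallPartsClass, h0, h1, List.getElem?_eq_none (by omega : (sparts l).length ≤ 2)]
    rfl
  · simp [smallPartsClass, h0, h1, h2, show x ≠ 4 by omega]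

theorem MemE.smallPartsClass_eq (h : MemE l) : smallPartsClass (sparts l) = 4 := by
  simp [smallPartsClass, h.2.1, h.2.2.1, h.2.2.2]

end

/-- for every `n ≥ 0`, `𝒫(n)` is the disjoint union of the five
subsets `𝒜(n), ℬ(n), 𝒞(n), 𝒟(n), ℰ(n)`. -/
theorem ising_partition_disjoint_union (n : ℕ) :
    ({l : n.Partition | MemA l} ∪ {l | MemB l} ∪ {l | MemC l} ∪ {l | MemD l} ∪ {l | MemE l}
        = {l | MemP l}) ∧
      Set.univ.PairwiseDisjoint
        ![{l : n.Partition | MemA l}, {l | MemB l}, {l | MemC l}, {l | MemD l},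
          {l | MemE l}] := by
  constructor
  · ext l
    simp only [Set.mem_union, Set.mem_ofPred_eq]
    refine ⟨?_, fun hP => ?_⟩
    · rintro ((((h | h) | h) | h) | h) <;> exact h.1
    · rcases memA_or_memB_or_memC_or_memD_or_memE hP with h | h | h | h | h <;> simp [h]
  · refine (Set.pairwiseDisjoint_fiber (fun l : n.Partition => smallPartsClass (sparts l))
      _).mono fun i => ?_
    fin_cases i
    exacts [fun _ => MemA.smallPartsClass_eq, fun _ => MemB.smallPartsClass_eq,
      fun _ => MemC.smallPartsClass_eq, fun _ => MemD.smallPartsClass_eq,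
      fun _ => MemE.smallPartsClass_eq]
end

section
/- The following identities hold in ℤ⟦t,q⟧: ∑_{m≥0} (t^m q^{m(m+1)}/(q)_m) ∑_{k=0}^{m} t^k q^{(k+1)m+2k²} binom(m,k)_q = ∑_{k₁,k₂≥0} t^{2k₁+k₂} q^{4k₁²+3k₁k₂+k₂²+2k₁+2k₂}/((q)_{k₁}(q)_{k₂}); ∑_{m≥1} (t^m q^{m(m+1)}/(q)_{m−1}) ∑_{k=0}^{m−1} t^k q^{k(m+1)+2k²} binom(m−1,k)_q = tq² ∑_{k₁,k₂≥0} t^{2k₁+k₂} q^{4k₁²+3k₁k₂+k₂²+5k₁+3k₂}/((q)_{k₁}(q)_{k₂}); ∑_{m≥2} (t^m q^{m²+1}/(q)_{m−2}) ∑_{k=0}^{m−2} t^k q^{k(m+3)+2k²} binom(m−2,k)_q = t²q⁵ ∑_{k₁,k₂≥0} t^{2k₁+k₂} q^{4k₁²+3k₁k₂+k₂²+9k₁+4k₂}/((q)_{k₁}(q)_{k₂}); ∑_{m≥2} (t^m q^{m²}/(q)_{m−2}) ∑_{k=0}^{m−2} t^k q^{k(m+2)+2k²} binom(m−2,k)_q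 = t²q⁴ ∑_{k₁,k₂≥0} t^{2k₁+k₂} q^{4k₁²+3k₁k₂+k₂²+8k₁+4k₂}/((q)_{k₁}(q)_{k₂}); and ∑_{m≥3} (t^m q^{m²−m+2}/(q)_{m−3}) ∑_{k=0}^{m−3} t^k q^{k(m+3)+2k²} binom(m−3,k)_q = t³q⁸ ∑_{k₁,k₂≥0} t^{2k₁+k₂} q^{4k₁²+3k₁k₂+k₂²+11k₁+5k₂}/((q)_{k₁}(q)_{k₂}). -/
/-!
Dividing by `(q)_{m-c}` cancels the numerator of `binom(m-c,k)_q`, so the `m`-th summand on the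
left becomes a sum over the antidiagonal `k₁ + k₂ = m - c` of
`t^(m+k₁) q^(…) / ((q)_{k₁} (q)_{k₂})`. Substituting `m = k₁ + k₂ + c` turns the sum over `m`
and the antidiagonal into the double sum over `(k₁, k₂)`, and the exponents into the quadratic
forms on the right. The coefficientwise truncations in `mvSum` and `mvSum₂` are harmless because
the summands indexed by `m`, resp. `(k₁, k₂)`, have `t`-order at least `m`, resp. `k₁ + k₂`.
-/

open MvPowerSeries

/-- The variable `t` in `ℤ⟦t,q⟧ = MvPowerSeries (Fin 2) ℤ`. -/
noncomputable def t : MvPowerSeries (Fin 2) ℤ := MvPowerSeries.X 0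
/-- The variable `q` in `ℤ⟦t,q⟧ = MvPowerSeries (Fin 2) ℤ`. -/
noncomputable def q : MvPowerSeries (Fin 2) ℤ := MvPowerSeries.X 1

/-- `(q)_n = ∏_{j=1}^n (1 - q^j)` in `ℤ⟦t,q⟧`. -/
noncomputable def qPoch (n : ℕ) : MvPowerSeries (Fin 2) ℤ :=
  ∏ j ∈ Finset.range n, (1 - q ^ (j + 1))

/-- The multiplicative inverse of `(q)_n` in `ℤ⟦t,q⟧` (its constant term is `1`). -/
noncomputable def qPochInv (n : ℕ) : MvPowerSeries (Fin 2) ℤ := invOfUnit (qPoch n) 1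

/-- The Gaussian binomial coefficient `binom(m,k)_q = (q)_m/((q)_k (q)_{m-k})` for
`0 ≤ k ≤ m`, and `0` otherwise, as an element of `ℤ⟦t,q⟧`. -/
noncomputable def qBinom (m k : ℕ) : MvPowerSeries (Fin 2) ℤ :=
  if k ≤ m then qPoch m * qPochInv k * qPochInv (m - k) else 0

/-- Sum of a family `f : ℕ → ℤ⟦t,q⟧`, defined coefficientwise.  It represents
`∑_{m ≥ 0} f m` whenever, for every exponent `d`, the summands `f m` with
`m ≥ d 0 + d 1 + 2` have vanishing `d`-th coefficient (here this holds since the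
`m`-th summand always has `t`-order at least `m` or `q`-order at least `m`). -/
noncomputable def mvSum (f : ℕ → MvPowerSeries (Fin 2) ℤ) : MvPowerSeries (Fin 2) ℤ :=
  fun d => ∑ m ∈ Finset.range (d 0 + d 1 + 2), MvPowerSeries.coeff d (f m)

/-- Sum of a doubly indexed family `f : ℕ → ℕ → ℤ⟦t,q⟧`, defined coefficientwise. -/
noncomputable def mvSum₂ (f : ℕ → ℕ → MvPowerSeries (Fin 2) ℤ) : MvPowerSeries (Fin 2) ℤ :=
  fun d => ∑ k₁ ∈ Finset.range (d 0 + d 1 + 2), ∑ k₂ ∈ Finset.range (d 0 + d 1 + 2),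
    MvPowerSeries.coeff d (f k₁ k₂)

/-- The closed formula claimed for `A(t,q)`:
`∑_{m≥0} (t^m q^{m(m+1)}/(q)_m) ∑_{k=0}^{m} t^k q^{(k+1)m+2k²} binom(m,k)_q`. -/
noncomputable def Aclosed : MvPowerSeries (Fin 2) ℤ :=
  mvSum fun m => t ^ m * q ^ (m * (m + 1)) * qPochInv m *
    ∑ k ∈ Finset.range (m + 1), t ^ k * q ^ ((k + 1) * m + 2 * k ^ 2) * qBinom m k

/-- The closed formula claimed for `B(t,q)`:
`∑_{m≥1} (t^m q^{m(m+1)}/(q)_{m-1}) ∑_{k=0}^{m-1} t^k q^{k(m+1)+2k²} binom(m-1,k)_q`. -/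
noncomputable def Bclosed : MvPowerSeries (Fin 2) ℤ :=
  mvSum fun m => if 1 ≤ m then
    t ^ m * q ^ (m * (m + 1)) * qPochInv (m - 1) *
      ∑ k ∈ Finset.range m, t ^ k * q ^ (k * (m + 1) + 2 * k ^ 2) * qBinom (m - 1) k
  else 0

/-- The closed formula claimed for `C(t,q)`:
`∑_{m≥2} (t^m q^{m²+1}/(q)_{m-2}) ∑_{k=0}^{m-2} t^k q^{k(m+3)+2k²} binom(m-2,k)_q`. -/
noncomputable def Cclosed : MvPowerSeries (Fin 2) ℤ :=
  mvSum fun m => if 2 ≤ m then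
    t ^ m * q ^ (m ^ 2 + 1) * qPochInv (m - 2) *
      ∑ k ∈ Finset.range (m - 1), t ^ k * q ^ (k * (m + 3) + 2 * k ^ 2) * qBinom (m - 2) k
  else 0

/-- The closed formula claimed for `D(t,q)`:
`∑_{m≥2} (t^m q^{m²}/(q)_{m-2}) ∑_{k=0}^{m-2} t^k q^{k(m+2)+2k²} binom(m-2,k)_q`. -/
noncomputable def Dclosed : MvPowerSeries (Fin 2) ℤ :=
  mvSum fun m => if 2 ≤ m then
    t ^ m * q ^ (m ^ 2) * qPochInv (m - 2) *
      ∑ k ∈ Finset.range (m - 1), t ^ k * q ^ (k * (m + 2) + 2 * k ^ 2) * qBinom (m - 2) k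
  else 0

/-- The closed formula claimed for `E(t,q)`:
`∑_{m≥3} (t^m q^{m²-m+2}/(q)_{m-3}) ∑_{k=0}^{m-3} t^k q^{k(m+3)+2k²} binom(m-3,k)_q`. -/
noncomputable def Eclosed : MvPowerSeries (Fin 2) ℤ :=
  mvSum fun m => if 3 ≤ m then
    t ^ m * q ^ (m ^ 2 - m + 2) * qPochInv (m - 3) *
      ∑ k ∈ Finset.range (m - 2), t ^ k * q ^ (k * (m + 3) + 2 * k ^ 2) * qBinom (m - 3) k
  else 0

open Finset

lemma qPoch_mul_qPochInv (n : ℕ) : qPoch n * qPochInv n = 1 :=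
  mul_invOfUnit _ 1 (by simp [qPoch, q])

lemma qPochInv_mul_qBinom {n k : ℕ} (hk : k ≤ n) :
    qPochInv n * qBinom n k = qPochInv k * qPochInv (n - k) := by
  rw [qBinom, if_pos hk, ← mul_assoc, ← mul_assoc, mul_comm (qPochInv n),
    qPoch_mul_qPochInv, one_mul]

lemma coeff_t_pow_mul_eq_zero {a : ℕ} {d : Fin 2 →₀ ℕ} (h : d 0 < a)
    (P : MvPowerSeries (Fin 2) ℤ) : coeff d (t ^ a * P) = 0 := by
  rw [t, X_pow_eq, coeff_monomial_mul, if_neg]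
  intro hle
  have h0 := hle 0
  simp only [Finsupp.single_eq_same] at h0
  omega

lemma coeff_mvSum (f : ℕ → MvPowerSeries (Fin 2) ℤ) (d : Fin 2 →₀ ℕ) :
    coeff d (mvSum f) = ∑ m ∈ range (d 0 + d 1 + 2), coeff d (f m) :=
  rfl

lemma coeff_mvSum₂ (g : ℕ → ℕ → MvPowerSeries (Fin 2) ℤ) (d : Fin 2 →₀ ℕ) :
    coeff d (mvSum₂ g) =
      ∑ k₁ ∈ range (d 0 + d 1 + 2), ∑ k₂ ∈ range (d 0 + d 1 + 2), coeff d (g k₁ k₂) :=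
  rfl

lemma coeff_mvSum₂_eq_sum_range {g : ℕ → ℕ → MvPowerSeries (Fin 2) ℤ}
    (hg : ∀ k₁ k₂ (d : Fin 2 →₀ ℕ), d 0 < k₁ + k₂ → coeff d (g k₁ k₂) = 0)
    {d : Fin 2 →₀ ℕ} {N : ℕ} (hN : d 0 + d 1 + 2 ≤ N) :
    coeff d (mvSum₂ g) = ∑ k₁ ∈ range N, ∑ k₂ ∈ range N, coeff d (g k₁ k₂) := by
  have hvanish : ∀ k₁ k₂, d 0 + d 1 + 2 ≤ k₁ ∨ d 0 + d 1 + 2 ≤ k₂ →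
      coeff d (g k₁ k₂) = 0 := fun k₁ k₂ h => hg k₁ k₂ d (by omega)
  have hsub := range_subset_range.mpr hN
  rw [coeff_mvSum₂]
  refine (sum_congr rfl fun k₁ _ => sum_subset hsub fun k₂ _ hk₂ => hvanish k₁ k₂ ?_).trans
    (sum_subset hsub fun k₁ _ hk₁ => sum_eq_zero fun k₂ _ => hvanish k₁ k₂ ?_)
  all_goals simp only [mem_range, not_lt] at *; omega

lemma mul_mvSum₂ (P : MvPowerSeries (Fin 2) ℤ) {g : ℕ → ℕ → MvPowerSeries (Fin 2) ℤ}
    (hg : ∀ k₁ k₂ (d : Fin 2 →₀ ℕ), d 0 < k₁ + k₂ → coeff d (g k₁ k₂) = 0) :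
    P * mvSum₂ g = mvSum₂ fun k₁ k₂ => P * g k₁ k₂ := by
  ext d
  set N := d 0 + d 1 + 2
  have hN : ∀ p ∈ antidiagonal d, p.2 0 + p.2 1 + 2 ≤ N := fun p hp => by
    have h := congrArg (· 0) (mem_antidiagonal.mp hp)
    have h' := congrArg (· 1) (mem_antidiagonal.mp hp)
    simp only [Finsupp.add_apply] at h h'
    omega
  calc coeff d (P * mvSum₂ g)
      = ∑ p ∈ antidiagonal d, coeff p.1 P *
          ∑ k₁ ∈ range N, ∑ k₂ ∈ range N, coeff p.2 (g k₁ k₂) := by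
        rw [coeff_mul]
        exact sum_congr rfl fun p hp => by rw [coeff_mvSum₂_eq_sum_range hg (hN p hp)]
    _ = coeff d (mvSum₂ fun k₁ k₂ => P * g k₁ k₂) := by
        simp only [coeff_mvSum₂, coeff_mul, mul_sum]
        rw [sum_comm]
        exact sum_congr rfl fun _ _ => sum_comm

lemma sum_range_ite_sum_antidiagonal {M : Type*} [AddCommMonoid M] {N c : ℕ}
    {G : ℕ → ℕ → M} (hG : ∀ k₁ k₂, N ≤ k₁ + k₂ + c → G k₁ k₂ = 0) :
    ∑ m ∈ range N, (if c ≤ m then ∑ p ∈ antidiagonal (m - c), G p.1 p.2 else 0) =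
      ∑ k₁ ∈ range N, ∑ k₂ ∈ range N, G k₁ k₂ := by
  rw [← sum_product', ← sum_filter_of_ne (p := fun p : ℕ × ℕ => p.1 + p.2 + c < N),
    ← sum_fiberwise_of_maps_to (g := fun p : ℕ × ℕ => p.1 + p.2 + c) (t := range N)]
  · refine sum_congr rfl fun m hm => ?_
    rw [mem_range] at hm
    split_ifs with hcm
    · refine sum_congr ?_ fun _ _ => rfl
      ext ⟨k₁, k₂⟩
      simp only [HasAntidiagonal.mem_antidiagonal, mem_filter, mem_product, mem_range]
      omega
    · refine (sum_eq_zero fun p hp => ?_).symm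
      simp only [mem_filter] at hp
      omega
  · intro p hp
    simp only [mem_filter, mem_range] at hp ⊢
    exact hp.2
  · intro p _ hp
    by_contra! h
    exact hp (hG p.1 p.2 h)

lemma mvSum_ite_sum_antidiagonal (c : ℕ) {g : ℕ → ℕ → MvPowerSeries (Fin 2) ℤ}
    (hg : ∀ k₁ k₂ (d : Fin 2 →₀ ℕ), d 0 < k₁ + k₂ + c → coeff d (g k₁ k₂) = 0) :
    (mvSum fun m => if c ≤ m then ∑ p ∈ antidiagonal (m - c), g p.1 p.2 else 0) =
      mvSum₂ g := by
  ext d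
  rw [coeff_mvSum, coeff_mvSum₂,
    ← sum_range_ite_sum_antidiagonal (c := c) fun k₁ k₂ h => hg k₁ k₂ d (by omega)]
  refine sum_congr rfl fun m _ => ?_
  rw [apply_ite (coeff d), map_sum, map_zero]

lemma qPochInv_mul_sum_qBinom (n a b : ℕ) (R : ℕ → ℕ) :
    t ^ a * q ^ b * qPochInv n * ∑ k ∈ range (n + 1), t ^ k * q ^ R k * qBinom n k =
      ∑ p ∈ antidiagonal n, t ^ (a + p.1) * q ^ (b + R p.1) * qPochInv p.1 * qPochInv p.2 := by
  rw [Nat.sum_antidiagonal_eq_sum_range_succ_mk, mul_sum]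
  refine sum_congr rfl fun k hk => ?_
  rw [pow_add, pow_add]
  linear_combination t ^ a * t ^ k * q ^ b * q ^ R k *
    qPochInv_mul_qBinom (Nat.le_of_lt_succ (mem_range.mp hk))

-- The inner range is written `m + 1 - c` since `simp` normalises it, for `c = 0, 1, 2, 3`, to the
-- ranges `m + 1`, `m`, `m - 1`, `m - 2` of the closed formulas.
theorem mvSum_eq_nahm_sum (c s : ℕ) (Q : ℕ → ℕ) (R E : ℕ → ℕ → ℕ)
    (hQR : ∀ k₁ k₂, Q (k₁ + k₂ + c) + R (k₁ + k₂ + c) k₁ = E k₁ k₂ + s) :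
    (mvSum fun m => if c ≤ m then t ^ m * q ^ Q m * qPochInv (m - c) *
        ∑ k ∈ range (m + 1 - c), t ^ k * q ^ R m k * qBinom (m - c) k else 0) =
      t ^ c * q ^ s * mvSum₂ fun k₁ k₂ =>
        t ^ (2 * k₁ + k₂) * q ^ E k₁ k₂ * qPochInv k₁ * qPochInv k₂ := by
  have hg : ∀ k₁ k₂ (d : Fin 2 →₀ ℕ), d 0 < k₁ + k₂ →
      coeff d (t ^ (2 * k₁ + k₂) * q ^ E k₁ k₂ * qPochInv k₁ * qPochInv k₂) = 0 :=
    fun k₁ k₂ d h => by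
      simpa only [mul_assoc] using coeff_t_pow_mul_eq_zero (by omega) _
  have hcg : ∀ k₁ k₂ (d : Fin 2 →₀ ℕ), d 0 < k₁ + k₂ + c → coeff d (t ^ c * q ^ s *
      (t ^ (2 * k₁ + k₂) * q ^ E k₁ k₂ * qPochInv k₁ * qPochInv k₂)) = 0 :=
    fun k₁ k₂ d h => by
      rw [show t ^ c * q ^ s * (t ^ (2 * k₁ + k₂) * q ^ E k₁ k₂ * qPochInv k₁ * qPochInv k₂) =
        t ^ (c + (2 * k₁ + k₂)) * (q ^ s * q ^ E k₁ k₂ * qPochInv k₁ * qPochInv k₂) by ring]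
      exact coeff_t_pow_mul_eq_zero (by omega) _
  rw [mul_mvSum₂ _ hg, ← mvSum_ite_sum_antidiagonal c hcg]
  congr 1
  funext m
  split_ifs with hm
  · obtain ⟨n, rfl⟩ := Nat.exists_eq_add_of_le' hm
    rw [Nat.add_sub_cancel, show n + c + 1 - c = n + 1 by omega, qPochInv_mul_sum_qBinom]
    refine sum_congr rfl fun p hp => ?_
    obtain rfl := HasAntidiagonal.mem_antidiagonal.mp hp
    rw [hQR, pow_add, pow_add, pow_add, pow_add]
    ring
  · rfl

/-- the quasiparticle (Nahm-sum) forms of the five closed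
formulas, as identities in `ℤ⟦t,q⟧`. -/
theorem ising_quasiparticle_forms :
    Aclosed = mvSum₂ (fun k₁ k₂ => t ^ (2 * k₁ + k₂) *
        q ^ (4 * k₁ ^ 2 + 3 * k₁ * k₂ + k₂ ^ 2 + 2 * k₁ + 2 * k₂) *
        qPochInv k₁ * qPochInv k₂) ∧
    Bclosed = t * q ^ 2 * mvSum₂ (fun k₁ k₂ => t ^ (2 * k₁ + k₂) *
        q ^ (4 * k₁ ^ 2 + 3 * k₁ * k₂ + k₂ ^ 2 + 5 * k₁ + 3 * k₂) *
        qPochInv k₁ * qPochInv k₂) ∧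
    Cclosed = t ^ 2 * q ^ 5 * mvSum₂ (fun k₁ k₂ => t ^ (2 * k₁ + k₂) *
        q ^ (4 * k₁ ^ 2 + 3 * k₁ * k₂ + k₂ ^ 2 + 9 * k₁ + 4 * k₂) *
        qPochInv k₁ * qPochInv k₂) ∧
    Dclosed = t ^ 2 * q ^ 4 * mvSum₂ (fun k₁ k₂ => t ^ (2 * k₁ + k₂) *
        q ^ (4 * k₁ ^ 2 + 3 * k₁ * k₂ + k₂ ^ 2 + 8 * k₁ + 4 * k₂) *
        qPochInv k₁ * qPochInv k₂) ∧
    Eclosed = t ^ 3 * q ^ 8 * mvSum₂ (fun k₁ k₂ => t ^ (2 * k₁ + k₂) *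
        q ^ (4 * k₁ ^ 2 + 3 * k₁ * k₂ + k₂ ^ 2 + 11 * k₁ + 5 * k₂) *
        qPochInv k₁ * qPochInv k₂) := by
  refine ⟨?_, ?_, ?_, ?_, ?_⟩
  · simpa [Aclosed] using mvSum_eq_nahm_sum 0 0 (fun m => m * (m + 1))
      (fun m k => (k + 1) * m + 2 * k ^ 2)
      (fun k₁ k₂ => 4 * k₁ ^ 2 + 3 * k₁ * k₂ + k₂ ^ 2 + 2 * k₁ + 2 * k₂) fun k₁ k₂ => by ring
  · simpa [Bclosed] using mvSum_eq_nahm_sum 1 2 (fun m => m * (m + 1))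
      (fun m k => k * (m + 1) + 2 * k ^ 2)
      (fun k₁ k₂ => 4 * k₁ ^ 2 + 3 * k₁ * k₂ + k₂ ^ 2 + 5 * k₁ + 3 * k₂) fun k₁ k₂ => by ring
  · simpa [Cclosed] using mvSum_eq_nahm_sum 2 5 (fun m => m ^ 2 + 1)
      (fun m k => k * (m + 3) + 2 * k ^ 2)
      (fun k₁ k₂ => 4 * k₁ ^ 2 + 3 * k₁ * k₂ + k₂ ^ 2 + 9 * k₁ + 4 * k₂) fun k₁ k₂ => by ring
  · simpa [Dclosed] using mvSum_eq_nahm_sum 2 4 (fun m => m ^ 2)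
      (fun m k => k * (m + 2) + 2 * k ^ 2)
      (fun k₁ k₂ => 4 * k₁ ^ 2 + 3 * k₁ * k₂ + k₂ ^ 2 + 8 * k₁ + 4 * k₂) fun k₁ k₂ => by ring
  · simpa [Eclosed] using mvSum_eq_nahm_sum 3 8 (fun m => m ^ 2 - m + 2)
      (fun m k => k * (m + 3) + 2 * k ^ 2)
      (fun k₁ k₂ => 4 * k₁ ^ 2 + 3 * k₁ * k₂ + k₂ ^ 2 + 11 * k₁ + 5 * k₂) fun k₁ k₂ => by
        zify [Nat.le_self_pow two_ne_zero (k₁ + k₂ + 3)]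
        ring
end

section
/- Each of the three monomials x₅x₄x₂², x₇x₆x₄x₂², and x₉x₈x₆x₄x₂² lies in the ideal I of R generated by the set {∂^k a : k ≥ 0} ∪ {∂^k b : k ≥ 0}, i.e., in the differential ideal generated by a and b. -/
/-- The index set `{n : ℕ // 2 ≤ n}` of the variables `x₂, x₃, x₄, …`. -/
abbrev IsingIdx : Type := {n : ℕ // 2 ≤ n}

/-- The variable `xₙ` (for `n ≥ 2`) of the ring `R = ℚ[x₂, x₃, x₄, …]`. -/
noncomputable def x (n : ℕ) (h : 2 ≤ n := by norm_num) : MvPolynomial IsingIdx ℚ :=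
  MvPolynomial.X ⟨n, h⟩

/-- The unique derivation `∂` of `R = ℚ[x₂, x₃, …]` with `∂xₙ = (n-1)·x_{n+1}`. -/
noncomputable def isingD :
    Derivation ℚ (MvPolynomial IsingIdx ℚ) (MvPolynomial IsingIdx ℚ) :=
  MvPolynomial.mkDerivation ℚ fun i =>
    (((i : ℕ) - 1 : ℕ) : ℚ) • MvPolynomial.X ⟨(i : ℕ) + 1, le_trans i.2 (Nat.le_succ _)⟩

/-- `a = x₂³` (corresponding to `L₋₂³`). -/
noncomputable def aIsing : MvPolynomial IsingIdx ℚ := x 2 ^ 3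

/-- `b = x₂x₃x₄ + (1/6)x₅x₂²` (corresponding to `L₋₄L₋₃L₋₂ + (1/6)L₋₅L₋₂²`). -/
noncomputable def bIsing : MvPolynomial IsingIdx ℚ :=
  x 2 * x 3 * x 4 + MvPolynomial.C (1 / 6 : ℚ) * (x 5 * x 2 ^ 2)

/-- The differential ideal generated by `a` and `b`: the ideal generated by all
iterated derivatives `∂^k a` and `∂^k b`, `k ≥ 0`. -/
noncomputable def isingIdeal : Ideal (MvPolynomial IsingIdx ℚ) :=
  Ideal.span ((Set.range fun k : ℕ => (⇑isingD)^[k] aIsing) ∪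
    (Set.range fun k : ℕ => (⇑isingD)^[k] bIsing))

/-!
For each monomial `m` there are a positive integer `N` and explicit polynomials `cₖ, dₖ` with
`N * m = ∑ₖ cₖ ∂ᵏa + ∑ₖ dₖ ∂ᵏ(6b)` (`6b` rather than `b` keeps the coefficients integral), and `N`
is a unit. The identities are checked by expanding `∂ᵏ` of the cubic monomials with the general
Leibniz rule and `∂ⁱxₙ = (n-1)n⋯(n+i-2) x_{n+i}`; differentiating one step at a time would create
`3ᵏ` terms before collecting.
-/

open MvPolynomial Finset

theorem Derivation.iterate_leibniz {R A : Type*} [CommSemiring R] [CommSemiring A] [Algebra R A]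
    (D : Derivation R A A) (n : ℕ) (a b : A) :
    D^[n] (a * b) = ∑ i ∈ range (n + 1), n.choose i • (D^[i] a * D^[n - i] b) := by
  induction n with
  | zero => simp
  | succ n ih =>
    rw [sum_choose_succ_nsmul (fun i j => D^[i] a * D^[j] b) n, Function.iterate_succ_apply', ih]
    simp only [map_sum, map_nsmul, Derivation.leibniz, smul_eq_mul, smul_add, sum_add_distrib,
      ← Function.iterate_succ_apply' D]
    congr 1
    · refine sum_congr rfl fun i hi => ?_
      rw [Nat.sub_add_comm (Nat.lt_succ_iff.mp (mem_range.mp hi)), mul_comm]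
    · exact sum_congr rfl fun i _ => by rw [mul_comm]

theorem Ideal.mem_of_natCast_mul_eq {A : Type*} [Semiring A] [Algebra ℚ A] {I : Ideal A}
    {N : ℕ} (hN : N ≠ 0) {p q : A} (hq : q ∈ I) (h : (N : A) * p = q) : p ∈ I := by
  have hu : IsUnit (N : A) := by
    simpa using (IsUnit.mk0 (N : ℚ) (Nat.cast_ne_zero.mpr hN)).map (algebraMap ℚ A)
  exact (I.unit_mul_mem_iff_mem hu).1 (h ▸ hq)

theorem isingD_x (n : ℕ) (h : 2 ≤ n) : isingD (x n h) = (n - 1) • x (n + 1) (by omega) := by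
  rw [isingD, x, mkDerivation_X, Nat.cast_smul_eq_nsmul]; rfl

theorem isingD_iterate_x (n : ℕ) (h : 2 ≤ n) (i : ℕ) :
    isingD^[i] (x n h) = (n - 1).ascFactorial i • x (n + i) (by omega) := by
  induction i with
  | zero => simp
  | succ i ih =>
    rw [Function.iterate_succ_apply', ih, map_nsmul, isingD_x, smul_smul, Nat.ascFactorial_succ,
      mul_comm (n - 1 + i)]
    congr 2
    omega

theorem aIsing_eq_mul : aIsing = x 2 * x 2 * x 2 := pow_three' _

theorem six_mul_bIsing_eq : 6 * bIsing = x 2 * x 2 * x 5 + 6 • (x 2 * x 3 * x 4) := by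
  have h6 : (6 : MvPolynomial IsingIdx ℚ) * C (1 / 6) = 1 := by
    rw [← map_ofNat C 6, ← map_mul]; norm_num
  rw [bIsing, nsmul_eq_mul, Nat.cast_ofNat]
  linear_combination (x 5 * x 2 ^ 2) * h6

theorem isingD_iterate_aIsing_mem (k : ℕ) : isingD^[k] aIsing ∈ isingIdeal :=
  Ideal.subset_span (Or.inl ⟨k, rfl⟩)

theorem isingD_iterate_six_mul_bIsing_mem (k : ℕ) : isingD^[k] (6 * bIsing) ∈ isingIdeal := by
  rw [← Nat.cast_ofNat, ← nsmul_eq_mul, iterate_map_nsmul]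
  exact Submodule.smul_of_tower_mem _ 6 (Ideal.subset_span (Or.inr ⟨k, rfl⟩))

noncomputable def isingCombination {m n : ℕ} (c : Fin m → MvPolynomial IsingIdx ℚ)
    (d : Fin n → MvPolynomial IsingIdx ℚ) : MvPolynomial IsingIdx ℚ :=
  ∑ k, c k * isingD^[k] aIsing + ∑ k, d k * isingD^[k] (6 * bIsing)

theorem isingCombination_mem {m n : ℕ} (c : Fin m → MvPolynomial IsingIdx ℚ)
    (d : Fin n → MvPolynomial IsingIdx ℚ) : isingCombination c d ∈ isingIdeal :=
  add_mem (sum_mem fun k _ => Ideal.mul_mem_left _ _ (isingD_iterate_aIsing_mem k))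
    (sum_mem fun k _ => Ideal.mul_mem_left _ _ (isingD_iterate_six_mul_bIsing_mem k))

theorem x5_x4_x2_sq_certificate :
    (300 : MvPolynomial IsingIdx ℚ) * (x 5 * x 4 * x 2 ^ 2) =
      isingCombination ![0, 24 * x 6, 24 * x 5, 12 * x 4, -x 3] ![-60 * x 4] := by
  simp only [isingCombination, Fin.sum_univ_succ, Fin.sum_univ_zero, Fin.val_zero, Fin.val_succ,
    Matrix.cons_val_zero, Matrix.cons_val_succ, zero_add]
  simp only [aIsing_eq_mul, six_mul_bIsing_eq, iterate_map_add, iterate_map_nsmul,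
    Derivation.iterate_leibniz, isingD_iterate_x, sum_range_succ, sum_range_zero]
  norm_num [Nat.choose_eq_descFactorial_div_factorial]
  ring

theorem x7_x6_x4_x2_sq_certificate :
    (169646400 : MvPolynomial IsingIdx ℚ) * (x 7 * x 6 * x 4 * x 2 ^ 2) =
      isingCombination
        ![0,
          -112855680 * x 3 * x 11 + 152812800 * x 4 * x 10 + 334656000 * x 5 * x 9 +
            292737024 * x 6 * x 8 + 140827680 * x 7 ^ 2,
          -112855680 * x 3 * x 10 - 3528000 * x 4 * x 9 + 121189824 * x 5 * x 8 +
            134866080 * x 6 * x 7,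
          -56427840 * x 3 * x 9 - 56383488 * x 4 * x 8 - 18340560 * x 5 * x 7 - 2980800 * x 6 ^ 2,
          -7743456 * x 3 * x 8 - 9818760 * x 4 * x 7 - 4521600 * x 5 * x 6,
          -1173564 * x 3 * x 7 - 428160 * x 4 * x 6 + 88200 * x 5 ^ 2,
          -148464 * x 3 * x 6 - 29400 * x 4 * x 5,
          -9564 * x 3 * x 5 + 1400 * x 4 ^ 2,
          1808 * x 3 * x 4,
          311 * x 3 ^ 2]
        ![156340800 * x 3 * x 9 + 351267840 * x 4 * x 8 + 298378080 * x 5 * x 7 +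
            139708800 * x 6 ^ 2,
          55384560 * x 4 * x 7 + 59875200 * x 5 * x 6] := by
  simp only [isingCombination, Fin.sum_univ_succ, Fin.sum_univ_zero, Fin.val_zero, Fin.val_succ,
    Matrix.cons_val_zero, Matrix.cons_val_succ, zero_add]
  simp only [aIsing_eq_mul, six_mul_bIsing_eq, iterate_map_add, iterate_map_nsmul,
    Derivation.iterate_leibniz, isingD_iterate_x, sum_range_succ, sum_range_zero]
  norm_num [Nat.choose_eq_descFactorial_div_factorial]
  ring

theorem x9_x8_x6_x4_x2_sq_certificate :
    (8257029580800000 : MvPolynomial IsingIdx ℚ) * (x 9 * x 8 * x 6 * x 4 * x 2 ^ 2) =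
      isingCombination
        ![0,
          -3208597007616000 * x 3 * x 5 * x 16 + 1396496592691200 * x 3 * x 6 * x 15 +
            1609760148480000 * x 3 * x 7 * x 14 - 8856164439936000 * x 3 * x 8 * x 13 -
            14541900928128000 * x 3 * x 9 * x 12 + 12668320556236800 * x 3 * x 10 * x 11 +
            13402852759296000 * x 4 * x 5 * x 15 - 20754249753600000 * x 4 * x 6 * x 14 +
            2693672682624000 * x 4 * x 7 * x 13 - 14627288033280000 * x 4 * x 8 * x 12 -
            24294900318796800 * x 4 * x 9 * x 11 + 658737515520000 * x 4 * x 10 ^ 2 -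
            3779074227456000 * x 5 ^ 2 * x 14 - 343285597670400 * x 5 * x 6 * x 13 +
            4211558862336000 * x 5 * x 7 * x 12 - 33290255552716800 * x 5 * x 8 * x 11 +
            76614941708928000 * x 5 * x 9 * x 10 - 1840136413409280 * x 6 ^ 2 * x 12 -
            27759390806568960 * x 6 * x 7 * x 11 + 49280363740200960 * x 6 * x 8 * x 10 +
            64013851997061120 * x 6 * x 9 ^ 2 + 18886840442265600 * x 7 ^ 2 * x 10 +
            95275949968742400 * x 7 * x 8 * x 9 + 11117600585625600 * x 8 ^ 3,
          -3208597007616000 * x 3 * x 5 * x 15 + 5225883095347200 * x 3 * x 6 * x 14 -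
            1787772539520000 * x 3 * x 7 * x 13 - 5433475614336000 * x 3 * x 8 * x 12 -
            175258469836800 * x 3 * x 9 * x 11 - 5552864542310400 * x 3 * x 10 ^ 2 +
            1148815950796800 * x 4 * x 5 * x 14 - 926912643148800 * x 4 * x 6 * x 13 +
            2124399467520000 * x 4 * x 7 * x 12 - 1763053481548800 * x 4 * x 8 * x 11 -
            546823291392000 * x 4 * x 9 * x 10 - 3718558157529600 * x 5 ^ 2 * x 13 +
            5377309898526720 * x 5 * x 6 * x 12 - 18955720655861760 * x 5 * x 7 * x 11 +
            20397986268226560 * x 5 * x 8 * x 10 + 24822306563281920 * x 5 * x 9 ^ 2 -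
            194150496153600 * x 6 ^ 2 * x 11 + 15670064189952000 * x 6 * x 7 * x 10 +
            59479879979520000 * x 6 * x 8 * x 9 + 14961584525184000 * x 7 ^ 2 * x 9 +
            17252768996812800 * x 7 * x 8 ^ 2,
          310394747520000 * x 3 * x 5 * x 14 + 914175203673600 * x 3 * x 6 * x 13 +
            817458143040000 * x 3 * x 7 * x 12 + 4466583421977600 * x 3 * x 8 * x 11 -
            11974654055347200 * x 3 * x 9 * x 10 - 382938650265600 * x 4 ^ 2 * x 14 +
            1239519385843200 * x 4 * x 5 * x 13 - 2812262379632640 * x 4 * x 6 * x 12 +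
            8261696349688320 * x 4 * x 7 * x 11 - 11185562736875520 * x 4 * x 8 * x 10 -
            10848302929981440 * x 4 * x 9 ^ 2 + 4175026598476800 * x 5 * x 6 * x 11 +
            269783694835200 * x 5 * x 7 * x 10 - 3560323571481600 * x 5 * x 8 * x 9 +
            1149612250521600 * x 6 ^ 2 * x 10 + 4149188362598400 * x 6 * x 7 * x 9 +
            1743352326144000 * x 6 * x 8 ^ 2 + 2399212676044800 * x 7 ^ 2 * x 8,
          191469325132800 * x 3 * x 4 * x 14 - 49617403545600 * x 3 * x 5 * x 13 +
            93129902046720 * x 3 * x 6 * x 12 + 714623743088640 * x 3 * x 7 * x 11 -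
            1461150213949440 * x 3 * x 8 * x 10 - 1756286029370880 * x 3 * x 9 ^ 2 +
            227340717120000 * x 4 * x 5 * x 12 + 160446136435200 * x 4 * x 6 * x 11 -
            1104014359526400 * x 4 * x 7 * x 10 - 5171446802995200 * x 4 * x 8 * x 9 -
            381165312211200 * x 5 ^ 2 * x 11 - 859855356403200 * x 5 * x 6 * x 10 -
            2117531911680000 * x 5 * x 7 * x 9 - 1728756725414400 * x 5 * x 8 ^ 2 -
            508819112121600 * x 6 ^ 2 * x 9 - 829325248012800 * x 6 * x 7 * x 8 +
            22290858374400 * x 7 ^ 3,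
          -31911554188800 * x 3 ^ 2 * x 14 + 1199593929600 * x 3 * x 4 * x 13 -
            37327975977600 * x 3 * x 5 * x 12 + 92468507281920 * x 3 * x 6 * x 11 -
            140784533084160 * x 3 * x 7 * x 10 - 452968449454080 * x 3 * x 8 * x 9 -
            22734071712000 * x 4 ^ 2 * x 12 + 38116531221120 * x 4 * x 5 * x 11 -
            117557696839680 * x 4 * x 6 * x 10 - 330616277544960 * x 4 * x 7 * x 9 -
            299442462888960 * x 4 * x 8 ^ 2 - 26251458791040 * x 5 ^ 2 * x 10 -
            138356522599680 * x 5 * x 6 * x 9 - 214538711546880 * x 5 * x 7 * x 8 -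
            41516323511040 * x 6 ^ 2 * x 8 - 4458171674880 * x 6 * x 7 ^ 2,
          -599796964800 * x 3 ^ 2 * x 13 + 11367035856000 * x 3 * x 4 * x 12 +
            20086838196480 * x 3 * x 5 * x 11 - 6477936975360 * x 3 * x 6 * x 10 -
            33870466932480 * x 3 * x 7 * x 9 - 15441111924480 * x 3 * x 8 ^ 2 +
            8750486263680 * x 4 * x 5 * x 10 - 21031619051520 * x 4 * x 6 * x 9 -
            11616287397120 * x 4 * x 7 * x 8 + 7512078309120 * x 5 * x 6 * x 8 +
            1930724087040 * x 5 * x 7 ^ 2 + 3078637994880 * x 6 ^ 2 * x 7,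
          -764790206400 * x 3 ^ 2 * x 12 - 478009160640 * x 3 * x 4 * x 11 -
            1139442120000 * x 3 * x 5 * x 10 - 4337894304000 * x 3 * x 6 * x 9 -
            3280357111680 * x 3 * x 7 * x 8 - 416689822080 * x 4 ^ 2 * x 10 -
            633683191680 * x 4 * x 5 * x 9 - 2746346964480 * x 4 * x 6 * x 8 +
            97790647680 * x 4 * x 7 ^ 2 - 536577022080 * x 5 ^ 2 * x 8 -
            262946632320 * x 5 * x 6 * x 7 - 55999175040 * x 6 ^ 3,
          -451914312960 * x 3 ^ 2 * x 11 + 259101973440 * x 3 * x 4 * x 10 -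
            66274403040 * x 3 * x 5 * x 9 - 236821527360 * x 3 * x 6 * x 8 -
            49422035520 * x 3 * x 7 ^ 2 + 79210398960 * x 4 ^ 2 * x 9 +
            37921111200 * x 4 * x 5 * x 8 - 49178067840 * x 4 * x 6 * x 7 -
            17238607920 * x 5 ^ 2 * x 7 + 13999793760 * x 5 * x 6 ^ 2,
          15302206080 * x 3 ^ 2 * x 10 + 74555179200 * x 3 * x 4 * x 9 +
            6511594320 * x 3 * x 5 * x 8 - 1344245760 * x 3 * x 6 * x 7 +
            9717005520 * x 4 ^ 2 * x 8 + 5746202640 * x 4 * x 5 * x 7 - 2598527520 * x 4 * x 6 ^ 2,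
          5069566680 * x 3 ^ 2 * x 9 + 4770164640 * x 3 * x 4 * x 8 + 37254480 * x 3 * x 5 * x 7 -
            108846240 * x 3 * x 6 ^ 2 - 419067000 * x 4 ^ 2 * x 7 - 68935680 * x 4 * x 5 * x 6,
          232684440 * x 3 ^ 2 * x 8 + 18486480 * x 3 * x 4 * x 7 - 27322536 * x 3 * x 5 * x 6 +
            46442232 * x 4 ^ 2 * x 6,
          4633860 * x 3 ^ 2 * x 7 + 11914824 * x 3 * x 4 * x 6 + 4001460 * x 3 * x 5 ^ 2,
          -224264 * x 3 ^ 2 * x 6 - 1121830 * x 3 * x 4 * x 5,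
          36805 * x 3 ^ 2 * x 5]
        ![-8580959202816000 * x 3 * x 6 * x 13 - 14316418980864000 * x 3 * x 7 * x 12 -
            31004087482368000 * x 3 * x 8 * x 11 + 10943864515584000 * x 3 * x 9 * x 10 +
            2738793196339200 * x 4 * x 6 * x 12 - 54953707640832000 * x 4 * x 7 * x 11 +
            55464223714099200 * x 4 * x 8 * x 10 + 55916903218176000 * x 4 * x 9 ^ 2 -
            47706576293376000 * x 5 * x 6 * x 11 + 6679600671744000 * x 5 * x 7 * x 10 +
            72198868860518400 * x 5 * x 8 * x 9 + 2280584097792000 * x 6 ^ 2 * x 10 +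
            24774824954880000 * x 6 * x 7 * x 9 + 21145617600307200 * x 6 * x 8 ^ 2,
          -1889589461760000 * x 4 * x 6 * x 11 + 8434499673600000 * x 4 * x 7 * x 10 +
            27668745693388800 * x 4 * x 8 * x 9 + 9310641500160000 * x 5 * x 6 * x 10 +
            19298845133568000 * x 5 * x 7 * x 9 + 13929608902809600 * x 5 * x 8 ^ 2 +
            9370420899840000 * x 6 ^ 2 * x 9 + 13444984782028800 * x 6 * x 7 * x 8,
          1388687908608000 * x 4 * x 7 * x 9 + 1273064586393600 * x 4 * x 8 ^ 2 +
            1479540142080000 * x 5 * x 6 * x 9 + 1493887198003200 * x 5 * x 7 * x 8 +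
            711374856192000 * x 6 ^ 2 * x 8,
          32604680908800 * x 4 * x 7 * x 8] := by
  simp only [isingCombination, Fin.sum_univ_succ, Fin.sum_univ_zero, Fin.val_zero, Fin.val_succ,
    Matrix.cons_val_zero, Matrix.cons_val_succ, zero_add]
  simp only [aIsing_eq_mul, six_mul_bIsing_eq, iterate_map_add, iterate_map_nsmul,
    Derivation.iterate_leibniz, isingD_iterate_x, sum_range_succ, sum_range_zero]
  norm_num [Nat.choose_eq_descFactorial_div_factorial]
  ring

/-- the three monomials `x₅x₄x₂²`, `x₇x₆x₄x₂²` and `x₉x₈x₆x₄x₂²`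
lie in the differential ideal generated by `a` and `b`. -/
theorem ising_monomials_mem_differential_ideal :
    x 5 * x 4 * x 2 ^ 2 ∈ isingIdeal ∧
    x 7 * x 6 * x 4 * x 2 ^ 2 ∈ isingIdeal ∧
    x 9 * x 8 * x 6 * x 4 * x 2 ^ 2 ∈ isingIdeal :=
  ⟨Ideal.mem_of_natCast_mul_eq (by norm_num) (isingCombination_mem _ _) x5_x4_x2_sq_certificate,
    Ideal.mem_of_natCast_mul_eq (by norm_num) (isingCombination_mem _ _) x7_x6_x4_x2_sq_certificate,
    Ideal.mem_of_natCast_mul_eq (by norm_num) (isingCombination_mem _ _)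
      x9_x8_x6_x4_x2_sq_certificate⟩
end

section
/- Let Q₁ = (√(2√2 − 1) + √2 − 1)/2 and Q₂ = 2/(√(2√2 − 1) − √2 + 3) be real numbers. Then 0 < Q₁ < 1, 0 < Q₂ < 1, and (Q₁, Q₂) solves the Nahm system for the matrix A = [[8,3],[3,2]]: namely 1 − Q₁ = Q₁⁸ Q₂³ and 1 − Q₂ = Q₁³ Q₂². -/
/-!
Put `x = Q₁` and `s = √2`. Since `2x + 1 - s = √(2s - 1)`, squaring gives `x² + x + 1 = s (x + 1)`,
and squaring once more eliminates `s`: `(x² + x)² = 2x + 1`. The same relation rewrites the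
denominator of `Q₂` as `2 x² (x + 1)`, so `Q₂ = 1 / (x² (1 + x))`, and over any field the quartic
relation alone makes `(x, 1 / (x² (1 + x)))` a solution of the Nahm equations for `[[8,3],[3,2]]`.
The bounds `Qᵢ < 1` then come for free: each `1 - Qᵢ` equals a product of positive numbers.
-/

theorem nahm_8_3_3_2_of_quartic {K : Type*} [Field K] {x : K}
    (hx : (x ^ 2 + x) ^ 2 = 2 * x + 1) (hx₀ : x ≠ 0) (hx₁ : x + 1 ≠ 0) :
    1 - x = x ^ 8 * (x ^ 2 * (x + 1))⁻¹ ^ 3 ∧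
      1 - (x ^ 2 * (x + 1))⁻¹ = x ^ 3 * (x ^ 2 * (x + 1))⁻¹ ^ 2 := by
  constructor
  · field_simp
    linear_combination -hx
  · field_simp
    linear_combination hx

theorem quartic_of_sq_add_add_one_eq {R : Type*} [CommRing R] {s x : R} (hs : s ^ 2 = 2)
    (hx : x ^ 2 + x + 1 = s * (x + 1)) : (x ^ 2 + x) ^ 2 = 2 * x + 1 := by
  linear_combination (x ^ 2 + x + 1 + s * (x + 1)) * hx + (x + 1) ^ 2 * hs

theorem sq_mul_add_one_of_sq_add_add_one_eq {R : Type*} [CommRing R] {s x : R} (hs : s ^ 2 = 2)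
    (hx : x ^ 2 + x + 1 = s * (x + 1)) : x ^ 2 * (x + 1) = x + 2 - s := by
  linear_combination (x + s) * hx + (x + 1) * hs

/-- `Q₁ = (√(2√2 - 1) + √2 - 1)/2` and
`Q₂ = 2/(√(2√2 - 1) - √2 + 3)` satisfy `0 < Qᵢ < 1` and solve the Nahm system
for the matrix `A = [[8,3],[3,2]]`: `1 - Q₁ = Q₁⁸ Q₂³` and `1 - Q₂ = Q₁³ Q₂²`. -/
theorem nahm_system_solution_8_3_3_2 :
    let Q₁ : ℝ := (Real.sqrt (2 * Real.sqrt 2 - 1) + Real.sqrt 2 - 1) / 2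
    let Q₂ : ℝ := 2 / (Real.sqrt (2 * Real.sqrt 2 - 1) - Real.sqrt 2 + 3)
    0 < Q₁ ∧ Q₁ < 1 ∧ 0 < Q₂ ∧ Q₂ < 1 ∧
      1 - Q₁ = Q₁ ^ 8 * Q₂ ^ 3 ∧ 1 - Q₂ = Q₁ ^ 3 * Q₂ ^ 2 := by
  intro Q₁ Q₂
  have hs : √2 ^ 2 = 2 := Real.sq_sqrt zero_le_two
  have hs₁ : 1 < √2 := by nlinarith [Real.sqrt_nonneg 2]
  have hr : √(2 * √2 - 1) ^ 2 = 2 * √2 - 1 := Real.sq_sqrt (by linarith)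
  have hQ₁ : Q₁ ^ 2 + Q₁ + 1 = √2 * (Q₁ + 1) := by
    linear_combination (1 / 4 : ℝ) * hr - (1 / 4 : ℝ) * hs
  have hQ₁_pos : 0 < Q₁ := by
    have := Real.sqrt_nonneg (2 * √2 - 1)
    simp only [Q₁]
    linarith
  have hQ₂ : Q₂ = (Q₁ ^ 2 * (Q₁ + 1))⁻¹ := by
    have hden : √(2 * √2 - 1) - √2 + 3 = 2 * (Q₁ ^ 2 * (Q₁ + 1)) := by
      rw [sq_mul_add_one_of_sq_add_add_one_eq hs hQ₁]
      ring
    simp only [Q₂, hden]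
    field_simp
  have hQ₂_pos : 0 < Q₂ := hQ₂ ▸ by positivity
  obtain ⟨h₁, h₂⟩ := nahm_8_3_3_2_of_quartic (quartic_of_sq_add_add_one_eq hs hQ₁)
    hQ₁_pos.ne' (by positivity)
  rw [← hQ₂] at h₁ h₂
  refine ⟨hQ₁_pos, ?_, hQ₂_pos, ?_, h₁, h₂⟩
  · linarith [show 0 < Q₁ ^ 8 * Q₂ ^ 3 by positivity]
  · linarith [show 0 < Q₁ ^ 3 * Q₂ ^ 2 by positivity]
end
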